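/- Let ψ_{n,m} be the Hermite wavelet as above, and let J²ψ_{n,m}(t) = ∫_0^t ∫_0^s ψ_{n,m}(u) du ds be its twice-iterated integral. Then for all t ∈ [0,1], |J²ψ_{n,m}(t)| ≤ 2^{-k/2} * h / (sqrt(n! * 2^n * sqrt(π)) * (m+1)), where h = ∫_{-1}^1 |H_{m+1}'(y)| dy. -/

import Mathlib

/-!
Integrating twice costs at most the L¹ norm: `|J²g(t)| ≤ |t| ‖g‖₁`. The wavelet is a Hermite
polynomial rescaled affinely onto an interval of length `2^(1-k)`, so
`‖ψ‖₁ = 2^(-k/2) ∫_{-1}^1 |H_m| / √(n! 2^n √π)`, and since `H_{m+1}' = 2(m+1) H_m` the stated bound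
is twice this.
-/

open Real

noncomputable def hermiteH : ℕ → ℝ → ℝ
  | 0, _ => 1
  | 1, t => 2 * t
  | (m + 2), t => 2 * t * hermiteH (m + 1) t - 2 * (m + 1) * hermiteH m t

noncomputable def hermiteWavelet (k n m : ℕ) (t : ℝ) : ℝ :=
  if t ∈ Set.Ico (((2 : ℝ) * n - 2) / 2 ^ k) ((2 * n) / 2 ^ k) then
    (2 : ℝ) ^ ((k : ℝ) / 2) * (1 / Real.sqrt (n.factorial * 2 ^ n * Real.sqrt π)) *
      hermiteH m (2 ^ k * t - (2 * n - 1))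
  else 0

/-- Twice-iterated integral `J²g(t) = ∫_0^t ∫_0^s g(u) du ds`. -/
noncomputable def J2 (g : ℝ → ℝ) (t : ℝ) : ℝ :=
  ∫ s in (0 : ℝ)..t, ∫ u in (0 : ℝ)..s, g u

open MeasureTheory

theorem hermiteH_succ_succ (m : ℕ) (t : ℝ) :
    hermiteH (m + 2) t = 2 * t * hermiteH (m + 1) t - 2 * (m + 1) * hermiteH m t := by
  rw [hermiteH]

theorem hasDerivAt_hermiteH_succ (m : ℕ) (y : ℝ) :
    HasDerivAt (hermiteH (m + 1)) (2 * (m + 1) * hermiteH m y) y := by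
  induction m using Nat.twoStepInduction generalizing y with
  | zero => simpa [hermiteH] using (hasDerivAt_id y).const_mul (2 : ℝ)
  | one =>
    have h := ((hasDerivAt_id' y).const_mul 2).mul ((hasDerivAt_id' y).const_mul 2)
    rw [show hermiteH 2 = fun t => 2 * t * (2 * t) - 2 by funext t; simp [hermiteH]]
    exact (h.sub_const 2).congr_deriv (by simp only [mul_one, Nat.cast_one, hermiteH]; ring)
  | more m ih₀ ih₁ =>
    have h := (((hasDerivAt_id' y).const_mul 2).mul (ih₁ y)).sub
      ((ih₀ y).const_mul (2 * ((m + 1 : ℕ) + 1 : ℝ)))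
    rw [funext (hermiteH_succ_succ (m + 1))]
    refine h.congr_deriv ?_
    rw [show m + 1 + 1 = m + 2 from rfl, hermiteH_succ_succ m y]
    push_cast
    ring

theorem deriv_hermiteH_succ (m : ℕ) :
    deriv (hermiteH (m + 1)) = fun y => 2 * (m + 1) * hermiteH m y :=
  funext fun y => (hasDerivAt_hermiteH_succ m y).deriv

theorem continuous_hermiteH : ∀ m, Continuous (hermiteH m)
  | 0 => continuous_const
  | m + 1 => continuous_iff_continuousAt.2 fun y =>
      (hasDerivAt_hermiteH_succ m y).continuousAt

theorem integral_abs_deriv_hermiteH_succ (m : ℕ) (a b : ℝ) :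
    ∫ y in a..b, |deriv (hermiteH (m + 1)) y| = 2 * (m + 1) * ∫ y in a..b, |hermiteH m y| := by
  simp only [deriv_hermiteH_succ, abs_mul, abs_of_pos (by positivity : (0 : ℝ) < 2 * (m + 1)),
    intervalIntegral.integral_const_mul]

theorem norm_intervalIntegral_le_integral_norm {E : Type*} [NormedAddCommGroup E]
    [NormedSpace ℝ E] {f : ℝ → E} (hf : Integrable f) (a b : ℝ) :
    ‖∫ x in a..b, f x‖ ≤ ∫ x, ‖f x‖ :=
  intervalIntegral.norm_integral_le_integral_norm_uIoc.trans <|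
    setIntegral_le_integral hf.norm <| .of_forall fun _ => norm_nonneg _

theorem abs_J2_le {g : ℝ → ℝ} (hg : Integrable g) (t : ℝ) :
    |J2 g t| ≤ (∫ x, |g x|) * |t| := by
  simpa [J2] using intervalIntegral.norm_integral_le_of_norm_le_const
    (a := 0) (b := t) fun s _ => norm_intervalIntegral_le_integral_norm hg 0 s

section Wavelet

variable (k n m : ℕ)

theorem hermiteWavelet_eq_indicator :
    hermiteWavelet k n m = (Set.Ico (((2 : ℝ) * n - 2) / 2 ^ k) ((2 * n) / 2 ^ k)).indicator
      fun t => (2 : ℝ) ^ ((k : ℝ) / 2) * (1 / Real.sqrt (n.factorial * 2 ^ n * Real.sqrt π)) *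
        hermiteH m (2 ^ k * t - (2 * n - 1)) := by
  funext t
  simp only [hermiteWavelet, Set.indicator_apply]

theorem integrable_hermiteWavelet : Integrable (hermiteWavelet k n m) := by
  rw [hermiteWavelet_eq_indicator]
  refine ((Continuous.integrableOn_Icc ?_).mono_set Set.Ico_subset_Icc_self).integrable_indicator
    measurableSet_Ico
  have := continuous_hermiteH m
  fun_prop

theorem integral_abs_hermiteWavelet :
    ∫ t, |hermiteWavelet k n m t| = (2 : ℝ) ^ (-(k : ℝ) / 2) *
      (∫ y in (-1 : ℝ)..1, |hermiteH m y|) / Real.sqrt (n.factorial * 2 ^ n * Real.sqrt π) := by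
  have h2k : (0 : ℝ) < 2 ^ k := by positivity
  have hab : ((2 : ℝ) * n - 2) / 2 ^ k ≤ (2 * n) / 2 ^ k := by gcongr; linarith
  simp only [← Real.norm_eq_abs, hermiteWavelet_eq_indicator, norm_indicator_eq_indicator_norm]
  rw [integral_indicator measurableSet_Ico, setIntegral_congr_set Ico_ae_eq_Ioc,
    ← intervalIntegral.integral_of_le hab]
  simp only [norm_mul, intervalIntegral.integral_const_mul, Real.norm_eq_abs]
  rw [intervalIntegral.integral_comp_mul_sub (fun y => |hermiteH m y|) h2k.ne']
  have hlo : (2 : ℝ) ^ k * ((2 * n - 2) / 2 ^ k) - (2 * n - 1) = -1 := by field_simp; ring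
  have hhi : (2 : ℝ) ^ k * (2 * n / 2 ^ k) - (2 * n - 1) = 1 := by field_simp; ring
  have hscale : (2 : ℝ) ^ ((k : ℝ) / 2) * ((2 : ℝ) ^ k)⁻¹ = 2 ^ (-(k : ℝ) / 2) := by
    rw [← rpow_natCast, ← rpow_neg zero_le_two, ← rpow_add zero_lt_two]
    ring_nf
  rw [hlo, hhi, smul_eq_mul, abs_of_pos (by positivity), abs_of_pos (by positivity), ← hscale]
  ring

end Wavelet

theorem hermite_wavelet_J2_bound_general (k n m : ℕ) :
    ∀ t ∈ Set.Icc (0 : ℝ) 1,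
      |J2 (hermiteWavelet k n m) t| ≤
        (2 : ℝ) ^ (-(k : ℝ) / 2) * (∫ y in (-1 : ℝ)..1, |deriv (hermiteH (m + 1)) y|) /
          (Real.sqrt (n.factorial * 2 ^ n * Real.sqrt π) * (m + 1)) := by
  rintro t ⟨ht0, ht1⟩
  set S := Real.sqrt (n.factorial * 2 ^ n * Real.sqrt π)
  set I := ∫ y in (-1 : ℝ)..1, |hermiteH m y|
  have hI : 0 ≤ I := intervalIntegral.integral_nonneg (by norm_num) fun _ _ => abs_nonneg _
  have hL1 : 0 ≤ (2 : ℝ) ^ (-(k : ℝ) / 2) * I / S := by positivity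
  calc |J2 (hermiteWavelet k n m) t|
      ≤ (∫ u, |hermiteWavelet k n m u|) * |t| := abs_J2_le (integrable_hermiteWavelet k n m) t
    _ ≤ ∫ u, |hermiteWavelet k n m u| :=
        mul_le_of_le_one_right (integral_nonneg fun _ => abs_nonneg _) (by rwa [abs_of_nonneg ht0])
    _ = 2 ^ (-(k : ℝ) / 2) * I / S := integral_abs_hermiteWavelet k n m
    _ ≤ 2 * (2 ^ (-(k : ℝ) / 2) * I / S) := by linarith
    _ = 2 ^ (-(k : ℝ) / 2) * (2 * (m + 1) * I) / (S * (m + 1)) := by field_simp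
    _ = _ := by rw [integral_abs_deriv_hermiteH_succ]

theorem hermite_wavelet_J2_bound (k n m : ℕ) (hk : 1 ≤ k) (hn1 : 1 ≤ n)
    (hn2 : n ≤ 2 ^ (k - 1)) :
    ∀ t ∈ Set.Icc (0 : ℝ) 1,
      |J2 (hermiteWavelet k n m) t| ≤
        (2 : ℝ) ^ (-(k : ℝ) / 2) * (∫ y in (-1 : ℝ)..1, |deriv (hermiteH (m + 1)) y|) /
          (Real.sqrt (n.factorial * 2 ^ n * Real.sqrt π) * (m + 1)) :=
  hermite_wavelet_J2_bound_general k n m
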